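/- Let f: ℝ^{m×n} → ℝ be L-smooth, bounded below by f⋆, and suppose each subproblem g^k(B) = f(W^k + P^k B) + (1/(2η))‖B‖² is solved to expected ε-inexactness with η < 1/L̂, L̂ = (m/r)L. Then with μ := 1/η − L̂, the iterates satisfy (1/K)∑_{k=0}^{K−1} (μ/2)𝔼‖B⋆^k‖² ≤ (f(W^0) − f⋆)/K + ε, where B⋆^k is the exact minimizer of g^k. -/

import Mathlib

/-!
At the exact minimiser `B⋆` of `g(B) = f(W + PB) + ‖B‖²/(2η)` the first-order condition reads
`⟪∇f(W + PB⋆), PB⋆⟫ = -‖B⋆‖²/η`. The descent lemma at `W + PB⋆`, together with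
`‖PB⋆‖² = (m/r)‖B⋆‖²`, then gives `f(W) ≥ g(B⋆) + (μ/2)‖B⋆‖²`, while `g(B̃) ≥ f(W + PB̃)`.
Hence each step satisfies `(μ/2)‖B⋆ᵏ‖² ≤ f(Wᵏ) - f(Wᵏ⁺¹) + (gᵏ(B̃ᵏ) - gᵏ(B⋆ᵏ))` pathwise;
summing telescopes, and taking expectations bounds the gaps by `ε`.
-/

open MeasureTheory ProbabilityTheory Matrix
open scoped BigOperators

instance matrixMeasurableSpace (m r : ℕ) :
    MeasurableSpace (Matrix (Fin m) (Fin r) ℝ) := MeasurableSpace.pi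

attribute [local instance] Matrix.normedAddCommGroup Matrix.normedSpace

/-- The action `B ↦ PB` of `P ∈ ℝ^{m×r}` on `B ∈ ℝ^{r×n}`, between Euclidean
(Frobenius) spaces of matrices. -/
noncomputable def app {m n r : ℕ} (P : Matrix (Fin m) (Fin r) ℝ)
    (B : EuclideanSpace ℝ (Fin r × Fin n)) : EuclideanSpace ℝ (Fin m × Fin n) :=
  WithLp.toLp 2 (fun p : Fin m × Fin n => ∑ k, P p.1 k * B (k, p.2))

open InnerProductSpace

section Smooth

variable {E : Type*} [NormedAddCommGroup E] [InnerProductSpace ℝ E] [CompleteSpace E]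

lemma hasDerivAt_comp_add_smul {f : E → ℝ} (hf : Differentiable ℝ f) (x v : E) (t : ℝ) :
    HasDerivAt (fun s : ℝ => f (x + s • v)) ⟪gradient f (x + t • v), v⟫_ℝ t := by
  have hline : HasDerivAt (fun s : ℝ => x + s • v) v t := by
    simpa using ((hasDerivAt_id t).smul_const v).const_add x
  simpa [toDual_apply_apply, Function.comp_def] using
    (hf (x + t • v)).hasGradientAt.hasFDerivAt.comp_hasDerivAt t hline

/-- Lower half of the descent lemma. -/
lemma add_inner_gradient_sub_le_of_lipschitz_gradient {f : E → ℝ} {L : ℝ}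
    (hf : Differentiable ℝ f) (hL : ∀ X Y, ‖gradient f X - gradient f Y‖ ≤ L * ‖X - Y‖)
    (x y : E) :
    f x + ⟪gradient f x, y - x⟫_ℝ - L / 2 * ‖y - x‖ ^ 2 ≤ f y := by
  set v := y - x
  -- the claim is `φ 0 ≤ φ 1`, and the Lipschitz bound on the gradient gives `φ' ≥ 0` on `t ≥ 0`
  set φ : ℝ → ℝ := fun t => f (x + t • v) - t * ⟪gradient f x, v⟫_ℝ + L / 2 * ‖v‖ ^ 2 * t ^ 2
  have hφ' : ∀ t, HasDerivAt φ
      (⟪gradient f (x + t • v), v⟫_ℝ - ⟪gradient f x, v⟫_ℝ + L / 2 * ‖v‖ ^ 2 * (2 * t)) t :=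
    fun t => ((hasDerivAt_comp_add_smul hf x v t).sub (hasDerivAt_mul_const _)).add
      (by simpa using (hasDerivAt_pow 2 t).const_mul (L / 2 * ‖v‖ ^ 2))
  have hmono : MonotoneOn φ (Set.Ici 0) := by
    refine monotoneOn_of_hasDerivWithinAt_nonneg (convex_Ici 0)
      (fun t _ => (hφ' t).continuousAt.continuousWithinAt)
      (fun t _ => (hφ' t).hasDerivWithinAt) fun t ht => ?_
    rw [interior_Ici, Set.mem_Ioi] at ht
    have hlip : ⟪gradient f x - gradient f (x + t • v), v⟫_ℝ ≤ L * (t * ‖v‖) * ‖v‖ :=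
      calc ⟪gradient f x - gradient f (x + t • v), v⟫_ℝ
          ≤ ‖gradient f x - gradient f (x + t • v)‖ * ‖v‖ := real_inner_le_norm _ _
        _ ≤ L * ‖x - (x + t • v)‖ * ‖v‖ := by gcongr; exact hL _ _
        _ = L * (t * ‖v‖) * ‖v‖ := by
          rw [sub_add_cancel_left, norm_neg, norm_smul, Real.norm_of_nonneg ht.le]
    rw [inner_sub_left] at hlip
    nlinarith
  have h01 := hmono Set.self_mem_Ici (Set.mem_Ici.mpr zero_le_one) zero_le_one
  simp only [φ, zero_smul, add_zero, zero_mul, sub_zero, one_smul, one_mul, one_pow, v,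
    add_sub_cancel] at h01
  linarith

section Prox

variable {F : Type*} [NormedAddCommGroup F] [InnerProductSpace ℝ F]

/-- The RSO subproblem `gᵏ`, with `A = Pᵏ` acting as a linear map. -/
noncomputable def proxObjective (f : E → ℝ) (η : ℝ) (W : E) (A : F →L[ℝ] E) (B : F) : ℝ :=
  f (W + A B) + 1 / (2 * η) * ‖B‖ ^ 2

variable {f : E → ℝ} {η : ℝ} {W : E} {A : F →L[ℝ] E} {Bstar : F}

lemma inner_gradient_eq_of_isMinOn_proxObjective (hf : Differentiable ℝ f)
    (hmin : IsMinOn (proxObjective f η W A) Set.univ Bstar) :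
    ⟪gradient f (W + A Bstar), A Bstar⟫_ℝ = -(1 / η) * ‖Bstar‖ ^ 2 := by
  set φ : ℝ → ℝ := fun t => proxObjective f η W A (t • Bstar)
  have hφ : φ = fun t => f (W + t • A Bstar) + 1 / (2 * η) * ‖Bstar‖ ^ 2 * t ^ 2 := by
    ext t
    simp only [φ, proxObjective, map_smul, norm_smul, mul_pow, Real.norm_eq_abs, sq_abs]
    ring
  have hφ' : HasDerivAt φ
      (⟪gradient f (W + (1 : ℝ) • A Bstar), A Bstar⟫_ℝ + 1 / (2 * η) * ‖Bstar‖ ^ 2 * (2 * 1)) 1 :=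
    hφ ▸ (hasDerivAt_comp_add_smul hf W (A Bstar) 1).add
      (by simpa using (hasDerivAt_pow 2 (1 : ℝ)).const_mul (1 / (2 * η) * ‖Bstar‖ ^ 2))
  have hloc : IsLocalMin φ 1 :=
    IsMinOn.isLocalMin (fun t _ => by simpa [φ] using hmin (Set.mem_univ (t • Bstar)))
      Filter.univ_mem
  have h0 := hloc.hasDerivAt_eq_zero hφ'
  rw [one_smul] at h0
  linear_combination h0

lemma proxObjective_add_le_of_isMinOn {L c : ℝ} (hf : Differentiable ℝ f)
    (hL : ∀ X Y, ‖gradient f X - gradient f Y‖ ≤ L * ‖X - Y‖)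
    (hA : ∀ B, ‖A B‖ ^ 2 = c * ‖B‖ ^ 2)
    (hmin : IsMinOn (proxObjective f η W A) Set.univ Bstar) :
    proxObjective f η W A Bstar + (1 / (2 * η) - c * L / 2) * ‖Bstar‖ ^ 2 ≤ f W := by
  have hdescent := add_inner_gradient_sub_le_of_lipschitz_gradient hf hL (W + A Bstar) W
  rw [sub_add_cancel_left, inner_neg_right, norm_neg, hA,
    inner_gradient_eq_of_isMinOn_proxObjective hf hmin] at hdescent
  unfold proxObjective
  linear_combination hdescent

lemma sq_norm_le_of_isMinOn_proxObjective {L c : ℝ} (hf : Differentiable ℝ f)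
    (hL : ∀ X Y, ‖gradient f X - gradient f Y‖ ≤ L * ‖X - Y‖)
    (hA : ∀ B, ‖A B‖ ^ 2 = c * ‖B‖ ^ 2) (hη : 0 ≤ η)
    (hmin : IsMinOn (proxObjective f η W A) Set.univ Bstar) (B : F) :
    (1 / (2 * η) - c * L / 2) * ‖Bstar‖ ^ 2
      ≤ f W - f (W + A B) + (proxObjective f η W A B - proxObjective f η W A Bstar) := by
  have hdecrease := proxObjective_add_le_of_isMinOn hf hL hA hmin
  have hpenalty : 0 ≤ 1 / (2 * η) * ‖B‖ ^ 2 := by positivity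
  unfold proxObjective at hdecrease ⊢
  linarith

end Prox

end Smooth

lemma mulVec_dotProduct_mulVec_self {R ι κ : Type*} [CommSemiring R] [Fintype ι] [Fintype κ]
    [DecidableEq κ]
    {P : Matrix ι κ R} {c : R} (hP : Pᵀ * P = c • 1) (b : κ → R) :
    (P *ᵥ b) ⬝ᵥ (P *ᵥ b) = c * (b ⬝ᵥ b) := by
  rw [dotProduct_mulVec, ← mulVec_transpose, mulVec_mulVec, hP, smul_mulVec, one_mulVec,
    smul_dotProduct, smul_eq_mul]

noncomputable def appCLM {m n r : ℕ} (P : Matrix (Fin m) (Fin r) ℝ) :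
    EuclideanSpace ℝ (Fin r × Fin n) →L[ℝ] EuclideanSpace ℝ (Fin m × Fin n) :=
  LinearMap.toContinuousLinearMap
    { toFun := app P
      map_add' := fun B C => by ext p; simp [app, mul_add, Finset.sum_add_distrib]
      map_smul' := fun t B => by ext p; simp [app, Finset.mul_sum, mul_left_comm] }

lemma norm_appCLM_sq {m n r : ℕ} {P : Matrix (Fin m) (Fin r) ℝ} {c : ℝ} (hP : Pᵀ * P = c • 1)
    (B : EuclideanSpace ℝ (Fin r × Fin n)) :
    ‖appCLM P B‖ ^ 2 = c * ‖B‖ ^ 2 := by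
  simp only [EuclideanSpace.real_norm_sq_eq, Fintype.sum_prod_type_right, Finset.mul_sum]
  refine Finset.sum_congr rfl fun j _ => ?_
  simpa [appCLM, app, dotProduct, mulVec, sq, Finset.mul_sum] using
    mulVec_dotProduct_mulVec_self hP fun k => B (k, j)

lemma sum_range_le_of_le_sub_add {a e F : ℕ → ℝ} {lb : ℝ} {K : ℕ}
    (hstep : ∀ k, a k ≤ F k - F (k + 1) + e k) (hlb : lb ≤ F K) :
    ∑ k ∈ Finset.range K, a k ≤ F 0 - lb + ∑ k ∈ Finset.range K, e k :=
  calc ∑ k ∈ Finset.range K, a k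
      ≤ ∑ k ∈ Finset.range K, (F k - F (k + 1) + e k) := Finset.sum_le_sum fun k _ => hstep k
    _ = F 0 - F K + ∑ k ∈ Finset.range K, e k := by
      rw [Finset.sum_add_distrib, Finset.sum_range_sub']
    _ ≤ F 0 - lb + ∑ k ∈ Finset.range K, e k := by linarith

lemma average_integral_le_of_le_sub_add {Ω : Type*} [MeasurableSpace Ω] {μ : Measure Ω}
    [IsProbabilityMeasure μ] {a e F : ℕ → Ω → ℝ} {F₀ lb ε : ℝ} {K : ℕ}
    (hF₀ : ∀ ω, F 0 ω = F₀) (hlb : ∀ ω, lb ≤ F K ω)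
    (hstep : ∀ k ω, a k ω ≤ F k ω - F (k + 1) ω + e k ω)
    (ha : ∀ k, Integrable (a k) μ) (he : ∀ k, Integrable (e k) μ) (hε : ∀ k, ∫ ω, e k ω ∂μ ≤ ε)
    (hK : 0 < K) :
    (1 / (K : ℝ)) * ∑ k ∈ Finset.range K, ∫ ω, a k ω ∂μ ≤ (F₀ - lb) / K + ε := by
  have hpath : ∀ ω, ∑ k ∈ Finset.range K, a k ω ≤ F₀ - lb + ∑ k ∈ Finset.range K, e k ω :=
    fun ω => hF₀ ω ▸ sum_range_le_of_le_sub_add (fun k => hstep k ω) (hlb ω)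
  have hmean : ∑ k ∈ Finset.range K, ∫ ω, a k ω ∂μ ≤ F₀ - lb + K * ε := by
    have hint : ∫ ω, ∑ k ∈ Finset.range K, a k ω ∂μ
        ≤ ∫ ω, (F₀ - lb + ∑ k ∈ Finset.range K, e k ω) ∂μ :=
      integral_mono (integrable_finsetSum _ fun k _ => ha k)
        ((integrable_const _).add (integrable_finsetSum _ fun k _ => he k)) hpath
    rw [integral_finsetSum _ fun k _ => ha k, integral_add (integrable_const _)
      (integrable_finsetSum _ fun k _ => he k), integral_finsetSum _ fun k _ => he k,
      integral_const, probReal_univ, one_smul] at hint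
    have hsum : ∑ k ∈ Finset.range K, ∫ ω, e k ω ∂μ ≤ K * ε := by
      simpa using Finset.sum_le_sum fun k (_ : k ∈ Finset.range K) => hε k
    linarith
  have hKpos : (0 : ℝ) < K := Nat.cast_pos.mpr hK
  calc (1 / (K : ℝ)) * ∑ k ∈ Finset.range K, ∫ ω, a k ω ∂μ
      ≤ (1 / (K : ℝ)) * (F₀ - lb + K * ε) := by gcongr
    _ = (F₀ - lb) / K + ε := by field_simp

theorem stmt_9_general (m n r : ℕ) (L Lhat η mupar ε fstar : ℝ)
    (hLhat : Lhat = ((m : ℝ) / (r : ℝ)) * L)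
    (hη : 0 < η) (hmupar : mupar = 1 / η - Lhat)
    (f : EuclideanSpace ℝ (Fin m × Fin n) → ℝ)
    (hdiff : Differentiable ℝ f)
    (hsmooth : ∀ X Y, ‖gradient f X - gradient f Y‖ ≤ L * ‖X - Y‖)
    (hbdd : ∀ X, fstar ≤ f X)
    (Ω : Type*) [MeasurableSpace Ω] (μ : Measure Ω) [IsProbabilityMeasure μ]
    (W : ℕ → Ω → EuclideanSpace ℝ (Fin m × Fin n))
    (P : ℕ → Ω → Matrix (Fin m) (Fin r) ℝ)
    (Btil Bstar : ℕ → Ω → EuclideanSpace ℝ (Fin r × Fin n))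
    (W0 : EuclideanSpace ℝ (Fin m × Fin n))
    (hW0 : ∀ ω, W 0 ω = W0)
    (hPorth : ∀ k ω, (P k ω)ᵀ * P k ω = ((m : ℝ) / (r : ℝ)) • (1 : Matrix (Fin r) (Fin r) ℝ))
    (g : ℕ → Ω → EuclideanSpace ℝ (Fin r × Fin n) → ℝ)
    (hg : ∀ k ω B, g k ω B = f (W k ω + app (P k ω) B) + (1 / (2 * η)) * ‖B‖ ^ 2)
    (hstar : ∀ k ω, IsMinOn (g k ω) Set.univ (Bstar k ω))
    (hinexact : ∀ k, ∫ ω, (g k ω (Btil k ω) - g k ω (Bstar k ω)) ∂μ ≤ ε)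
    (hinexact_int : ∀ k, Integrable (fun ω => g k ω (Btil k ω) - g k ω (Bstar k ω)) μ)
    (hupdate : ∀ k ω, W (k + 1) ω = W k ω + app (P k ω) (Btil k ω))
    (hBint : ∀ k, Integrable (fun ω => ‖Bstar k ω‖ ^ 2) μ)
    (K : ℕ) (hK : 0 < K) :
    (1 / (K : ℝ)) * ∑ k ∈ Finset.range K, (mupar / 2) * ∫ ω, ‖Bstar k ω‖ ^ 2 ∂μ
      ≤ (f W0 - fstar) / K + ε := by
  have hstep : ∀ k ω, mupar / 2 * ‖Bstar k ω‖ ^ 2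
      ≤ f (W k ω) - f (W (k + 1) ω) + (g k ω (Btil k ω) - g k ω (Bstar k ω)) := by
    intro k ω
    have hgk : g k ω = proxObjective f η (W k ω) (appCLM (P k ω)) := funext (hg k ω)
    have hdecrease := sq_norm_le_of_isMinOn_proxObjective hdiff hsmooth (norm_appCLM_sq (hPorth k ω))
      hη.le (hgk ▸ hstar k ω) (Btil k ω)
    rw [hgk, hupdate]
    calc mupar / 2 * ‖Bstar k ω‖ ^ 2
        = (1 / (2 * η) - m / r * L / 2) * ‖Bstar k ω‖ ^ 2 := by rw [hmupar, hLhat]; ring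
      _ ≤ _ := hdecrease
  simp_rw [← integral_const_mul]
  exact average_integral_le_of_le_sub_add (a := fun k ω => mupar / 2 * ‖Bstar k ω‖ ^ 2)
    (F := fun k ω => f (W k ω)) (fun ω => by rw [hW0]) (fun ω => hbdd _) hstep
    (fun k => (hBint k).const_mul _) hinexact_int hinexact hK

/-- In the RSO method with `η < 1/L̂`, `L̂ = (m/r)L` and `μ := 1/η − L̂`, the exact
subproblem minimizers satisfy
`(1/K)∑_{k<K} (μ/2)𝔼‖B⋆^k‖² ≤ (f(W⁰) − f⋆)/K + ε`. -/
theorem stmt_9 (m n r : ℕ) (hm : 0 < m) (hr : 0 < r) (L Lhat η mupar ε fstar : ℝ)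
    (hL : 0 < L) (hLhat : Lhat = ((m : ℝ) / (r : ℝ)) * L)
    (hη : 0 < η) (hη' : η < 1 / Lhat) (hmupar : mupar = 1 / η - Lhat)
    (hε : 0 ≤ ε)
    (f : EuclideanSpace ℝ (Fin m × Fin n) → ℝ)
    (hdiff : Differentiable ℝ f)
    (hsmooth : ∀ X Y, ‖gradient f X - gradient f Y‖ ≤ L * ‖X - Y‖)
    (hbdd : ∀ X, fstar ≤ f X)
    (Ω : Type*) [MeasurableSpace Ω] (μ : Measure Ω) [IsProbabilityMeasure μ]
    (W : ℕ → Ω → EuclideanSpace ℝ (Fin m × Fin n))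
    (P : ℕ → Ω → Matrix (Fin m) (Fin r) ℝ)
    (Btil Bstar : ℕ → Ω → EuclideanSpace ℝ (Fin r × Fin n))
    (W0 : EuclideanSpace ℝ (Fin m × Fin n))
    (hW0 : ∀ ω, W 0 ω = W0)
    (hPorth : ∀ k ω, (P k ω)ᵀ * P k ω = ((m : ℝ) / (r : ℝ)) • (1 : Matrix (Fin r) (Fin r) ℝ))
    (hPsecond : ∀ k, ∫ ω, P k ω * (P k ω)ᵀ ∂μ = (1 : Matrix (Fin m) (Fin m) ℝ))
    (hPint : ∀ k, @Integrable _ _ SeminormedAddGroup.toContinuousENorm _ _ (fun ω => P k ω * (P k ω)ᵀ) μ)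
    (hindep : ∀ k, IndepFun (P k) (W k) μ)
    (g : ℕ → Ω → EuclideanSpace ℝ (Fin r × Fin n) → ℝ)
    (hg : ∀ k ω B, g k ω B = f (W k ω + app (P k ω) B) + (1 / (2 * η)) * ‖B‖ ^ 2)
    (hstar : ∀ k ω, IsMinOn (g k ω) Set.univ (Bstar k ω))
    (hinexact : ∀ k, ∫ ω, (g k ω (Btil k ω) - g k ω (Bstar k ω)) ∂μ ≤ ε)
    (hinexact_int : ∀ k, Integrable (fun ω => g k ω (Btil k ω) - g k ω (Bstar k ω)) μ)
    (hupdate : ∀ k ω, W (k + 1) ω = W k ω + app (P k ω) (Btil k ω))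
    (hBint : ∀ k, Integrable (fun ω => ‖Bstar k ω‖ ^ 2) μ)
    (K : ℕ) (hK : 0 < K) :
    (1 / (K : ℝ)) * ∑ k ∈ Finset.range K, (mupar / 2) * ∫ ω, ‖Bstar k ω‖ ^ 2 ∂μ
      ≤ (f W0 - fstar) / K + ε :=
  stmt_9_general m n r L Lhat η mupar ε fstar hLhat hη hmupar f hdiff hsmooth hbdd Ω μ W P Btil
    Bstar W0 hW0 hPorth g hg hstar hinexact hinexact_int hupdate hBint K hK
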